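/- arXiv:2302.04731 — 2 statements merged into one kernel-verified Lean document; each statement's English description precedes it below -/
import Mathlib

section
/- If a hypothesis class 𝓗 ⊆ {0,1}^ℕ is properly CPAC learnable, then 𝓗 has a computable asymptotic ERM. -/
open Filter
open scoped ENNReal

/-- A hypothesis is a function `ℕ → Bool` (i.e. an element of `{0,1}^ℕ`). -/
abbrev Hyp := ℕ → Bool

/-- A sample is a finite sequence of labeled examples. -/
abbrev Sample := List (ℕ × Bool)

/-- A learner maps samples to hypotheses. -/
abbrev Learner := Sample → Hyp

/-- Generalization error `L_D(h) = Pr_{(x,y)∼D}[h(x) ≠ y]`. -/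
noncomputable def genError (D : PMF (ℕ × Bool)) (h : Hyp) : ℝ≥0∞ :=
  D.toOuterMeasure {p | h p.1 ≠ p.2}

/-- The distribution of `m` i.i.d. draws from `D`, as a PMF on samples of size `m`. -/
noncomputable def iidPMF (D : PMF (ℕ × Bool)) : ℕ → PMF Sample
  | 0 => PMF.pure []
  | m + 1 => D.bind fun p => (iidPMF D m).map (List.cons p)

/-- `Pr_{S ∼ D^m}[S ∈ E]`. -/
noncomputable def samplePr (D : PMF (ℕ × Bool)) (m : ℕ) (E : Set Sample) : ℝ≥0∞ :=
  (iidPMF D m).toOuterMeasure E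

/-- The PAC inequality for accuracy/confidence parameter `n` and sample size `m`:
for every distribution `D`,
`Pr_{S∼D^m}[L_D(A(S)) ≤ inf_{h∈H} L_D(h) + 1/n] ≥ 1 − 1/n`. -/
def PACCondition (A : Learner) (H : Set Hyp) (n m : ℕ) : Prop :=
  ∀ D : PMF (ℕ × Bool),
    1 - ((n : ℝ≥0∞))⁻¹ ≤
      samplePr D m {S | genError D (A S) ≤ (⨅ h ∈ H, genError D h) + ((n : ℝ≥0∞))⁻¹}

/-- `A` PAC learns `H`. -/
def PACLearns (A : Learner) (H : Set Hyp) : Prop :=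
  ∀ n : ℕ, ∃ m₀ : ℕ, ∀ m ≥ m₀, PACCondition A H n m

/-- The sample complexity of `A` w.r.t. `H`: the minimal `m₀` such that the PAC
inequality for `n` holds for all `m ≥ m₀`. -/
noncomputable def sampleComplexity (A : Learner) (H : Set Hyp) (n : ℕ) : ℕ :=
  sInf {m₀ | ∀ m ≥ m₀, PACCondition A H n m}

/-- A learner is computable if the two-argument function `(S, x) ↦ A(S)(x)` is computable
(equivalently, there is an algorithm producing from `S` a Turing machine computing the
total function `A(S)`). -/
def ComputableLearner (A : Learner) : Prop :=
  Computable₂ fun (S : Sample) (x : ℕ) => A S x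

/-- A learner is proper for `H` if it only outputs hypotheses from `H`. -/
def ProperFor (A : Learner) (H : Set Hyp) : Prop := ∀ S, A S ∈ H

/-- `H` is CPAC learnable: some computable learner PAC learns it. -/
def CPACLearnable (H : Set Hyp) : Prop :=
  ∃ A : Learner, ComputableLearner A ∧ PACLearns A H

/-- `H` is properly CPAC learnable. -/
def ProperlyCPACLearnable (H : Set Hyp) : Prop :=
  ∃ A : Learner, ComputableLearner A ∧ ProperFor A H ∧ PACLearns A H

/-- `H` is SCPAC learnable: some computable learner PAC learns it with sample complexity
bounded by a total computable function. -/
def SCPACLearnable (H : Set Hyp) : Prop :=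
  ∃ A : Learner, ComputableLearner A ∧ PACLearns A H ∧
    ∃ g : ℕ → ℕ, Computable g ∧ ∀ n, sampleComplexity A H n ≤ g n

/-- `H` is properly SCPAC learnable. -/
def ProperlySCPACLearnable (H : Set Hyp) : Prop :=
  ∃ A : Learner, ComputableLearner A ∧ ProperFor A H ∧ PACLearns A H ∧
    ∃ g : ℕ → ℕ, Computable g ∧ ∀ n, sampleComplexity A H n ≤ g n

/-- Empirical error `L_S(h) = |{i : h(x_i) ≠ y_i}| / |S|`. -/
noncomputable def empError (S : Sample) (h : Hyp) : ℝ≥0∞ :=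
  ((S.countP fun p => h p.1 != p.2 : ℕ) : ℝ≥0∞) / (S.length : ℝ≥0∞)

/-- `A` is an ERM for `H`: on every sample it outputs a hypothesis of `H` minimizing
the empirical error over `H`. -/
def IsERM (A : Learner) (H : Set Hyp) : Prop :=
  ∀ S : Sample, A S ∈ H ∧ ∀ h ∈ H, empError S (A S) ≤ empError S h

/-- `A` is an asymptotic ERM for `H`. -/
def IsAsymptoticERM (A : Learner) (H : Set Hyp) : Prop :=
  ProperFor A H ∧
  ∃ ε : ℕ → ℝ≥0∞, (∀ m, ε m ≤ 1) ∧ Tendsto ε atTop (nhds 0) ∧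
    ∀ S : Sample, empError S (A S) ≤ (⨅ h ∈ H, empError S h) + ε S.length

/-- `H` shatters the finite set `s`. -/
def Shatters (H : Set Hyp) (s : Finset ℕ) : Prop :=
  ∀ g : ℕ → Bool, ∃ h ∈ H, ∀ x ∈ s, h x = g x

/-- The VC dimension of `H` is at most `d`. -/
def VCDimAtMost (H : Set Hyp) (d : ℕ) : Prop :=
  ∀ s : Finset ℕ, Shatters H s → s.card ≤ d

/-- `H` has finite VC dimension. -/
def FiniteVCDim (H : Set Hyp) : Prop := ∃ d, VCDimAtMost H d

/-- `w` is a `k`-witness of VC dimension for `H`: on every increasing `(k+1)`-tuple it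
produces a Boolean `(k+1)`-tuple which is not the trace of any `h ∈ H` on the tuple. -/
def IsKWitness (k : ℕ) (w : List ℕ → List Bool) (H : Set Hyp) : Prop :=
  ∀ xs : List ℕ, xs.length = k + 1 → xs.Chain' (· < ·) →
    (w xs).length = k + 1 ∧ ∀ h ∈ H, xs.map h ≠ w xs

/-- The support of a hypothesis: `h⁻¹(1)`. -/
def hypSupport (h : Hyp) : Set ℕ := {x | h x = true}

/-- `h` is finitely supported. -/
def FinitelySupported (h : Hyp) : Prop := (hypSupport h).Finite

/-- The finitely supported hypothesis with support (the set of elements of) `l`. -/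
def listIndicator (l : List ℕ) : Hyp := fun x => decide (x ∈ l)

/-- A class of finitely supported hypotheses is decidable: there is an algorithm that,
given the support of a finitely supported `h` (as a list), decides whether `h ∈ H`. -/
def DecidableClass (H : Set Hyp) : Prop :=
  ∃ d : List ℕ → Bool, Computable d ∧ ∀ l : List ℕ, (d l = true ↔ listIndicator l ∈ H)

/-- `H` shatters the full binary tree of depth `d` whose node at binary path `p`
(with `|p| < d`) is labeled `t p`: every leaf (a binary path of length `d`) is reached
by some `h ∈ H`, going right at a node labeled `x` iff `h x = 1`. -/
def ShattersTree (H : Set Hyp) (d : ℕ) (t : List Bool → ℕ) : Prop :=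
  ∀ l : List Bool, l.length = d →
    ∃ h ∈ H, ∀ (i : ℕ) (hi : i < l.length), l[i] = h (t (l.take i))

/-! ### The class `𝓗_f` -/

/-- The `j`-th smallest element of the `k`-th block `I_k` of positive even numbers
(`1 ≤ j ≤ k`): `n_{kj} = k(k-1) + 2j`. -/
def nkj (k j : ℕ) : ℕ := k * (k - 1) + 2 * j

/-- The block `I_k` (of size `k`). -/
def Iblk (k : ℕ) : Finset ℕ := (Finset.Icc 1 k).image (nkj k)

/-- `h_{kj}`: the indicator of `I_k \ {n_{kj}}`. -/
def hkj (k j : ℕ) : Hyp := fun n => decide (n ∈ Iblk k ∧ n ≠ nkj k j)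

/-- `h_a`: the indicator of `I_{f(a)} ∪ {2a+1}`. -/
def hA (f : ℕ → ℕ) (a : ℕ) : Hyp := fun n => decide (n ∈ Iblk (f a) ∨ n = 2 * a + 1)

/-- The class `𝓗_f = {h_{kj} : 1 ≤ j ≤ k} ∪ {h_a : a ∈ ℕ}`. -/
def Hf (f : ℕ → ℕ) : Set Hyp :=
  {h | ∃ k j, 1 ≤ j ∧ j ≤ k ∧ h = hkj k j} ∪ {h | ∃ a, h = hA f a}

/-! ### Good hypotheses w.r.t. a witness -/

/-- `h` is good w.r.t. the `k`-witness `w`: it has finite support and disagrees with `w`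
on every increasing `(k+1)`-tuple lying strictly below `max supp(h)`. -/
def IsGood (k : ℕ) (w : List ℕ → List Bool) (h : Hyp) : Prop :=
  FinitelySupported h ∧
  ∀ xs : List ℕ, xs.length = k + 1 → xs.Chain' (· < ·) →
    (∀ x ∈ xs, x < sSup (hypSupport h)) → xs.map h ≠ w xs

/-- The set of good hypotheses w.r.t. `w`. -/
def Hgood (k : ℕ) (w : List ℕ → List Bool) : Set Hyp := {h | IsGood k w h}

/-! Given a proper computable PAC learner `A` and a sample `S`, run `A` on each of the
`|S|^|S|` samples of size `|S|` drawn from `S` and keep an output with the fewest mistakes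
on `S`. The uniform distribution on `S` has the empirical error on `S` as its
generalization error, so the PAC guarantee for accuracy `1/n` at sample size `|S|` says
that with positive probability, hence for at least one of these resamples, `A` is within
`1/n` of the best empirical error in `H`. The excess empirical error is therefore at most
the best accuracy certified at size `|S|`, which tends to `0`. -/

namespace Computable

variable {α β σ : Type*} [Primcodable α] [Primcodable β] [Primcodable σ]

theorem list_foldl {f : α → List β} {g : α → σ} {h : α → σ × β → σ}
    (hf : Computable f) (hg : Computable g) (hh : Computable₂ h) :
    Computable fun a => (f a).foldl (fun s b => h a (s, b)) (g a) := by
  -- Fold along the indices `k < (f a).length`; the state after `k` steps is the fold of `take k`.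
  have hstep : Computable₂ fun (a : α) (p : ℕ × σ) =>
      ((f a)[p.1]?.map fun b => h a (p.2, b)).getD p.2 :=
    (option_getD (option_map (list_getElem?.comp (hf.comp fst) (fst.comp snd))
      (hh.comp (fst.comp fst) ((snd.comp (snd.comp fst)).pair snd)).to₂)
      (snd.comp snd)).to₂
  refine (nat_rec (list_length.comp hf) hg hstep).of_eq fun a => ?_
  suffices ∀ k, Nat.rec (motive := fun _ => σ) (g a)
      (fun k s => ((f a)[k]?.map fun b => h a (s, b)).getD s) k
        = ((f a).take k).foldl (fun s b => h a (s, b)) (g a) by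
    simpa using this (f a).length
  intro k
  induction k with
  | zero => rfl
  | succ k ih =>
    simp only [ih, List.take_add_one, List.foldl_append]
    cases (f a)[k]? <;> rfl

theorem list_argmin {l : α → List β} {f : α → β → ℕ} (hl : Computable l)
    (hf : Computable₂ f) : Computable fun a => (l a).argmin (f a) := by
  have hlt : Computable₂ fun (x : α × (Option β × β)) (c : β) =>
      decide (f x.1 x.2.2 < f x.1 c) :=
    Primrec.nat_lt.decide.to_comp.comp (hf.comp (fst.comp fst) (snd.comp (snd.comp fst)))
      (hf.comp (fst.comp fst) snd) |>.to₂
  have hstep : Computable₂ fun (a : α) (p : Option β × β) =>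
      List.argAux (fun b c => f a b < f a c) p.1 p.2 := by
    refine (option_casesOn (fst.comp snd) (option_some.comp (snd.comp snd))
      (cond hlt (option_some.comp (snd.comp (snd.comp fst))) (option_some.comp snd)).to₂).of_eq
      fun x => ?_
    rcases x with ⟨a, _ | c, b⟩ <;> simp [List.argAux]
  exact (list_foldl hl (const none) hstep).of_eq fun a => rfl

end Computable

theorem List.countP_eq_foldl {α : Type*} (p : α → Bool) (l : List α) :
    l.countP p = l.foldl (fun n a => n + (p a).toNat) 0 := by
  suffices ∀ n, l.foldl (fun n a => n + (p a).toNat) n = n + l.countP p by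
    simpa using (this 0).symm
  induction l with
  | nil => simp
  | cons a l ih =>
    intro n
    rw [List.foldl_cons, ih, List.countP_cons]
    cases p a <;> simp
    omega

theorem Primrec.list_sections_replicate {α : Type*} [Primcodable α] :
    Primrec₂ fun (S : List α) (m : ℕ) => (List.replicate m S).sections := by
  have hstep : Primrec₂ fun (S : List α) (p : ℕ × List (List α)) =>
      p.2.flatMap fun T => S.map fun a => a :: T :=
    (list_flatMap (snd.comp snd)
      (list_map (fst.comp fst) (list_cons.comp snd (snd.comp fst)).to₂).to₂).to₂
  refine (nat_rec (const [[]]) hstep).of_eq fun S m => ?_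
  induction m with
  | zero => rfl
  | succ m ih => simp [ih, List.replicate_succ]

theorem List.mem_sections_replicate {α : Type*} {S T : List α} (hT : ∀ a ∈ T, a ∈ S) :
    T ∈ (List.replicate T.length S).sections := by
  rw [List.mem_sections, List.forall₂_iff_get]
  simp only [List.length_replicate, List.get_eq_getElem, List.getElem_replicate, true_and]
  exact fun i _ _ => hT _ (List.getElem_mem _)

-- Classical `DecidableEq`, to match `PMF.toOuterMeasure_ofMultiset_apply`.
open scoped Classical in
theorem Multiset.tsum_count_eq_card {α : Type*} (s : Multiset α) :
    ∑' x, (s.count x : ℝ≥0∞) = Multiset.card s := by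
  rw [tsum_eq_sum (s := s.toFinset) fun x hx => by simpa using hx, ← Nat.cast_sum,
    Multiset.toFinset_sum_count_eq]

theorem mem_support_iidPMF {D : PMF (ℕ × Bool)} {m : ℕ} {T : Sample}
    (hT : T ∈ (iidPMF D m).support) : T.length = m ∧ ∀ p ∈ T, p ∈ D.support := by
  induction m generalizing T with
  | zero =>
    rw [iidPMF, PMF.support_pure, Set.mem_singleton_iff] at hT
    simp [hT]
  | succ m ih =>
    simp only [iidPMF, PMF.support_bind, PMF.support_map, Set.mem_iUnion, Set.mem_image] at hT
    obtain ⟨p, hp, T, hT, rfl⟩ := hT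
    obtain ⟨hlen, hmem⟩ := ih hT
    exact ⟨by simp [hlen], List.forall_mem_cons.2 ⟨hp, hmem⟩⟩

def mistakes (h : Hyp) (S : Sample) : ℕ := S.countP fun p => h p.1 != p.2

theorem empError_eq_mistakes_div (S : Sample) (h : Hyp) :
    empError S h = mistakes h S / S.length := rfl

theorem empError_le_one (S : Sample) (h : Hyp) : empError S h ≤ 1 :=
  ENNReal.div_le_of_le_mul (by rw [one_mul]; exact_mod_cast List.countP_le_length)

theorem genError_ofMultiset (S : Sample) (hS : (S : Multiset (ℕ × Bool)) ≠ 0) (h : Hyp) :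
    genError (PMF.ofMultiset S hS) h = empError S h := by
  classical
  rw [genError, PMF.toOuterMeasure_ofMultiset_apply, Multiset.tsum_count_eq_card, empError,
    List.countP_eq_length_filter]
  simp only [Multiset.filter_coe, Multiset.coe_card, Set.mem_ofPred_eq]
  congr 3
  exact List.filter_congr fun p _ => by cases h p.1 <;> cases p.2 <;> rfl

theorem PACCondition.exists_mem_support {A : Learner} {H : Set Hyp} {n m : ℕ}
    (hpac : PACCondition A H n m) (hn : 1 < n) (D : PMF (ℕ × Bool)) :
    ∃ T ∈ (iidPMF D m).support,
      genError D (A T) ≤ (⨅ h ∈ H, genError D h) + (n : ℝ≥0∞)⁻¹ := by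
  have hpos : 0 < 1 - (n : ℝ≥0∞)⁻¹ :=
    tsub_pos_of_lt (ENNReal.inv_lt_one.2 (by exact_mod_cast hn))
  have hne : samplePr D m _ ≠ 0 := (hpos.trans_le (hpac D)).ne'
  rw [samplePr, Ne, PMF.toOuterMeasure_apply_eq_zero_iff] at hne
  exact Set.not_disjoint_iff.1 hne

def bestOfResamples (A : Learner) : Learner := fun S =>
  A (((List.replicate S.length S).sections.argmin fun T => mistakes (A T) S).getD S)

theorem mistakes_bestOfResamples_le (A : Learner) {S T : Sample} (hlen : T.length = S.length)
    (hT : ∀ p ∈ T, p ∈ S) : mistakes (bestOfResamples A S) S ≤ mistakes (A T) S := by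
  have hmem : T ∈ (List.replicate S.length S).sections := hlen ▸ List.mem_sections_replicate hT
  obtain ⟨T', hT'⟩ : ∃ T', (List.replicate S.length S).sections.argmin
      (fun T => mistakes (A T) S) = some T' :=
    Option.ne_none_iff_exists'.1 (List.argmin_eq_none.not.2 (List.ne_nil_of_mem hmem))
  rw [bestOfResamples, hT', Option.getD_some]
  exact not_lt.1 (List.not_lt_of_mem_argmin hmem hT')

theorem empError_bestOfResamples_le {A : Learner} {H : Set Hyp} {S : Sample} {n : ℕ}
    (hpac : PACCondition A H n S.length) :
    empError S (bestOfResamples A S) ≤ (⨅ h ∈ H, empError S h) + (n : ℝ≥0∞)⁻¹ := by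
  rcases le_or_gt n 1 with hn | hn
  · refine (empError_le_one S _).trans (le_add_left ?_)
    exact ENNReal.one_le_inv.2 (by exact_mod_cast hn)
  rcases eq_or_ne S [] with rfl | hS
  · simp [empError]
  have hS' : (S : Multiset (ℕ × Bool)) ≠ 0 := by simpa using hS
  obtain ⟨T, hT, hgood⟩ := hpac.exists_mem_support hn (PMF.ofMultiset S hS')
  obtain ⟨hlen, hTS⟩ := mem_support_iidPMF hT
  simp only [genError_ofMultiset] at hgood
  refine le_trans ?_ hgood
  rw [empError_eq_mistakes_div, empError_eq_mistakes_div]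
  gcongr
  exact mistakes_bestOfResamples_le A hlen fun p hp => by simpa using hTS p hp

noncomputable def pacAccuracy (A : Learner) (H : Set Hyp) (m : ℕ) : ℝ≥0∞ :=
  ⨅ (n : ℕ) (_ : PACCondition A H n m), (n : ℝ≥0∞)⁻¹

theorem pacCondition_one (A : Learner) (H : Set Hyp) (m : ℕ) : PACCondition A H 1 m :=
  fun D => by simp

theorem pacAccuracy_le_one (A : Learner) (H : Set Hyp) (m : ℕ) : pacAccuracy A H m ≤ 1 :=
  (iInf₂_le 1 (pacCondition_one A H m)).trans_eq (by simp)

theorem PACLearns.tendsto_pacAccuracy {A : Learner} {H : Set Hyp} (hA : PACLearns A H) :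
    Tendsto (pacAccuracy A H) atTop (nhds 0) := by
  refine ENNReal.tendsto_atTop_zero.2 fun e he => ?_
  obtain ⟨n, hn⟩ := ENNReal.exists_inv_nat_lt he.ne'
  obtain ⟨m₀, hm₀⟩ := hA n
  exact ⟨m₀, fun m hm => (iInf₂_le n (hm₀ m hm)).trans hn.le⟩

theorem empError_bestOfResamples_le_add_pacAccuracy (A : Learner) (H : Set Hyp)
    (S : Sample) :
    empError S (bestOfResamples A S) ≤
      (⨅ h ∈ H, empError S h) + pacAccuracy A H S.length := by
  simp only [pacAccuracy, ENNReal.add_iInf]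
  exact le_iInf₂ fun n hpac => empError_bestOfResamples_le hpac

open Computable in
theorem ComputableLearner.computable₂_mistakes {A : Learner} (hA : ComputableLearner A) :
    Computable₂ fun T S => mistakes (A T) S := by
  have hstep : Computable₂ fun (x : Sample × Sample) (p : ℕ × (ℕ × Bool)) =>
      p.1 + (A x.1 p.2.1 != p.2.2).toNat :=
    (Primrec.nat_add.to_comp.comp (fst.comp snd)
      ((Primrec.dom_bool Bool.toNat).to_comp.comp ((Primrec.dom_bool₂ bne).to_comp.comp
        (hA.comp (fst.comp fst) (fst.comp (snd.comp snd))) (snd.comp (snd.comp snd))))).to₂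
  exact ((list_foldl snd (const 0) hstep).of_eq
    fun x => (List.countP_eq_foldl (fun p => A x.1 p.1 != p.2) x.2).symm).to₂

theorem ComputableLearner.bestOfResamples {A : Learner} (hA : ComputableLearner A) :
    ComputableLearner (bestOfResamples A) := by
  have hresamples : Computable fun S : Sample => (List.replicate S.length S).sections :=
    (Primrec.list_sections_replicate.comp Primrec.id Primrec.list_length).to_comp
  have hbest : Computable fun S : Sample =>
      ((List.replicate S.length S).sections.argmin fun T => mistakes (A T) S).getD S :=
    Computable.option_getD (Computable.list_argmin hresamples
      (hA.computable₂_mistakes.comp Computable.snd Computable.fst)) Computable.id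
  exact hA.comp (hbest.comp Computable.fst) Computable.snd

/-- If `H` is properly CPAC learnable, then `H` has a computable
asymptotic ERM. -/
theorem computable_asymptoticERM_of_properCPAC (H : Set Hyp)
    (hH : ProperlyCPACLearnable H) :
    ∃ A : Learner, ComputableLearner A ∧ IsAsymptoticERM A H := by
  obtain ⟨A, hAc, hAH, hPAC⟩ := hH
  exact ⟨bestOfResamples A, hAc.bestOfResamples, fun S => hAH _,
    pacAccuracy A H, pacAccuracy_le_one A H, hPAC.tendsto_pacAccuracy,
    empError_bestOfResamples_le_add_pacAccuracy A H⟩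
end

section
/- Let f : ℕ → ℕ be an injective function. Then the VC dimension of the hypothesis class 𝓗_f is at most 3: no 4 distinct natural numbers are shattered by 𝓗_f. -/
open Filter
open scoped ENNReal

/-! Every `h ∈ 𝓗_f` is supported in `I_K ∪ {o}` for one block `I_K` and one point
`o`, so a shattered 4-set has three points `x, z, w` in a single block. No `h ∈ 𝓗_f` is true at
`x` and false at both `z` and `w`: an `h_{kj}` true somewhere in `I_K` omits only one point of
`I_K`, and an `h_a` true at the even point `x` contains all of `I_K`. -/

lemma mem_Iblk_iff {n k : ℕ} : n ∈ Iblk k ↔ ∃ j, 1 ≤ j ∧ j ≤ k ∧ n = k * (k - 1) + 2 * j := by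
  simp only [Iblk, nkj, Finset.mem_image, Finset.mem_Icc, and_assoc, eq_comm]

lemma even_of_mem_Iblk {n k : ℕ} (h : n ∈ Iblk k) : Even n := by
  obtain ⟨j, -, -, rfl⟩ := mem_Iblk_iff.mp h
  exact (Nat.even_mul_pred_self k).add (even_two_mul j)

lemma mem_Iblk_bounds {n k : ℕ} (h : n ∈ Iblk k) : k * (k - 1) < n ∧ n ≤ k * (k + 1) := by
  obtain ⟨j, hj, hjk, rfl⟩ := mem_Iblk_iff.mp h
  cases k with
  | zero => omega
  | succ m => simp only [Nat.add_sub_cancel]; constructor <;> nlinarith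

lemma eq_of_mem_Iblk {n k k' : ℕ} (h : n ∈ Iblk k) (h' : n ∈ Iblk k') : k = k' := by
  have hk := mem_Iblk_bounds h
  have hk' := mem_Iblk_bounds h'
  have hsep : ∀ {a b : ℕ}, a < b → a * (a + 1) ≤ b * (b - 1) := fun {a b} hab =>
    mul_comm a (a + 1) ▸ Nat.mul_le_mul hab (Order.le_sub_one_of_lt hab)
  rcases lt_trichotomy k k' with hlt | heq | hgt
  · exact absurd (hsep hlt) (by omega)
  · exact heq
  · exact absurd (hsep hgt) (by omega)

lemma hkj_eq_true {k j n : ℕ} : hkj k j n = true ↔ n ∈ Iblk k ∧ n ≠ nkj k j := by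
  simp [hkj]

lemma hA_eq_true {f : ℕ → ℕ} {a n : ℕ} : hA f a n = true ↔ n ∈ Iblk (f a) ∨ n = 2 * a + 1 := by
  simp [hA]

namespace Hf

variable {f : ℕ → ℕ} {h : Hyp}

lemma exists_support_subset (hh : h ∈ Hf f) :
    ∃ K o, ∀ n, h n = true → n ∈ Iblk K ∨ n = o := by
  rcases hh with ⟨k, j, -, -, rfl⟩ | ⟨a, rfl⟩
  · exact ⟨k, 0, fun n hn => .inl (hkj_eq_true.mp hn).1⟩
  · exact ⟨f a, 2 * a + 1, fun n hn => hA_eq_true.mp hn⟩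

lemma eq_of_eq_false_of_mem_Iblk (hh : h ∈ Hf f) {K x z w : ℕ}
    (hx : x ∈ Iblk K) (hz : z ∈ Iblk K) (hw : w ∈ Iblk K)
    (htx : h x = true) (hfz : h z = false) (hfw : h w = false) : z = w := by
  rcases hh with ⟨k, j, -, -, rfl⟩ | ⟨a, rfl⟩
  · obtain rfl : k = K := eq_of_mem_Iblk (hkj_eq_true.mp htx).1 hx
    have omitted : ∀ y ∈ Iblk k, hkj k j y = false → y = nkj k j := fun y hy hfy => by
      by_contra hne
      simp [hkj_eq_true.mpr ⟨hy, hne⟩] at hfy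
    rw [omitted z hz hfz, omitted w hw hfw]
  · have hxa : x ∈ Iblk (f a) := (hA_eq_true.mp htx).resolve_right fun hodd =>
      Nat.not_even_iff_odd.mpr ⟨a, hodd⟩ (even_of_mem_Iblk hx)
    rw [← eq_of_mem_Iblk hxa hx] at hz
    simp [hA_eq_true.mpr (.inl hz)] at hfz

end Hf

theorem Hf_VCdim_le_three_general (f : ℕ → ℕ) :
    ∀ s : Finset ℕ, s.card = 4 → ¬ Shatters (Hf f) s := by
  intro s hs hshat
  obtain ⟨h₁, hh₁, ht₁⟩ := hshat fun _ => true
  obtain ⟨K, o, hsupp⟩ := Hf.exists_support_subset hh₁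
  have hblock : ∀ n ∈ s.erase o, n ∈ Iblk K := fun n hn =>
    (hsupp n (ht₁ n (Finset.mem_of_mem_erase hn))).resolve_right (Finset.ne_of_mem_erase hn)
  have hcard : 2 < (s.erase o).card := by
    have := Finset.pred_card_le_card_erase (s := s) (a := o)
    omega
  obtain ⟨x, z, w, hx, hz, hw, hxz, hxw, hzw⟩ := Finset.two_lt_card_iff.mp hcard
  obtain ⟨h₂, hh₂, ht₂⟩ := hshat fun n => decide (n = x)
  have hval : ∀ n ∈ s.erase o, h₂ n = decide (n = x) := fun n hn =>
    ht₂ n (Finset.mem_of_mem_erase hn)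
  exact hzw (Hf.eq_of_eq_false_of_mem_Iblk hh₂ (hblock x hx) (hblock z hz) (hblock w hw)
    (by simp [hval x hx]) (by simp [hval z hz, Ne.symm hxz]) (by simp [hval w hw, Ne.symm hxw]))

/-- For an injective `f : ℕ → ℕ`, the VC dimension of `𝓗_f` is at
most 3: no 4 distinct natural numbers are shattered by `𝓗_f`. -/
theorem Hf_VCdim_le_three (f : ℕ → ℕ) (hinj : Function.Injective f) :
    ∀ s : Finset ℕ, s.card = 4 → ¬ Shatters (Hf f) s :=
  Hf_VCdim_le_three_general f
end
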